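/- Let p₁ = x₁(x₁² − x₃²), p₂ = x₂(x₂² − x₃²) and p₃ = (3x₁² + 3x₂² − 4x₃²)x₃. Then the ternary sextic f = p₁² + p₂² + p₃² equals x₁⁶ + x₂⁶ + 7(x₁⁴ + x₂⁴)x₃² + 18x₁²x₂²x₃² − 23(x₁² + x₂²)x₃⁴ + 16x₃⁶; this form f is strictly positive, lies on the boundary ∂Σ₆ of the sum of squares cone, and f = p₁² + p₂² + p₃² is, up to orthogonal equivalence, the only sum of squares representation of f by real forms. -/

import Mathlib

set_option maxHeartbeats 3200000

open MvPolynomial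

/-- The space `A₆` of ternary sextic forms (homogeneous polynomials of degree 6
in `ℝ[x₁,x₂,x₃]`), as a submodule of the polynomial ring. -/
noncomputable abbrev A6 : Submodule ℝ (MvPolynomial (Fin 3) ℝ) :=
  homogeneousSubmodule (Fin 3) ℝ 6

instance (n : ℕ) : FiniteDimensional ℝ (homogeneousSubmodule (Fin 3) ℝ n) :=
  Submodule.finiteDimensional_of_le (S₂ := restrictTotalDegree (Fin 3) ℝ n)
    (fun p hp => (mem_restrictTotalDegree _ _ _).2
      ((mem_homogeneousSubmodule n p).1 hp).totalDegree_le)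

/-- The canonical (finite-dimensional vector space) topology on the space of
homogeneous forms, induced by a linear isomorphism with a coordinate space. -/
noncomputable instance (n : ℕ) : NormedAddCommGroup (homogeneousSubmodule (Fin 3) ℝ n) :=
  NormedAddCommGroup.induced _ _
    ((Module.Basis.ofVectorSpace ℝ (homogeneousSubmodule (Fin 3) ℝ n)).equivFun.toLinearMap)
    (LinearEquiv.injective _)

noncomputable instance (n : ℕ) : NormedSpace ℝ (homogeneousSubmodule (Fin 3) ℝ n) :=
  NormedSpace.induced ℝ _ _
    ((Module.Basis.ofVectorSpace ℝ (homogeneousSubmodule (Fin 3) ℝ n)).equivFun.toLinearMap)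

/-- The cone `Σ₆ ⊆ A₆` of sums of squares of cubic forms. -/
def Sigma6 : Set A6 :=
  {f | ∃ (r : ℕ) (p : Fin r → MvPolynomial (Fin 3) ℝ),
    (∀ i, (p i).IsHomogeneous 3) ∧ (f : MvPolynomial (Fin 3) ℝ) = ∑ i, p i ^ 2}

/-- Padding a finite family with zeros. -/
def pad {M : Type*} [Zero M] {r : ℕ} (s : ℕ) (q : Fin r → M) : Fin s → M :=
  fun i => if h : (i : ℕ) < r then q ⟨i, h⟩ else 0

/-- The cubics `p₁ = x₁(x₁²−x₃²)`, `p₂ = x₂(x₂²−x₃²)`, `p₃ = (3x₁²+3x₂²−4x₃²)x₃`. -/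
noncomputable def pp : Fin 3 → MvPolynomial (Fin 3) ℝ :=
  ![X 0 * (X 0 ^ 2 - X 2 ^ 2), X 1 * (X 1 ^ 2 - X 2 ^ 2),
    (3 * X 0 ^ 2 + 3 * X 1 ^ 2 - 4 * X 2 ^ 2) * X 2]
noncomputable def D3 (a b c : ℕ) : Fin 3 →₀ ℕ :=
  Finsupp.single 0 a + Finsupp.single 1 b + Finsupp.single 2 c

lemma D3_apply0 (a b c : ℕ) : (D3 a b c) 0 = a := by simp [D3, Finsupp.single_apply]
lemma D3_apply1 (a b c : ℕ) : (D3 a b c) 1 = b := by simp [D3, Finsupp.single_apply]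
lemma D3_apply2 (a b c : ℕ) : (D3 a b c) 2 = c := by simp [D3, Finsupp.single_apply]

lemma deg3 (m : Fin 3 →₀ ℕ) : m.degree = m 0 + m 1 + m 2 := by
  rw [Finsupp.degree_apply, Finset.sum_subset (Finset.subset_univ m.support)
    (by intro x _ hx; exact Finsupp.notMem_support_iff.mp hx)]
  simp [Fin.sum_univ_three]

lemma D3_degree (a b c : ℕ) : (D3 a b c).degree = a + b + c := by
  rw [deg3, D3_apply0, D3_apply1, D3_apply2]

lemma D3_eq_iff {a b c a' b' c' : ℕ} : D3 a b c = D3 a' b' c' ↔ a = a' ∧ b = b' ∧ c = c' := by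
  constructor
  · intro h
    exact ⟨by simpa [D3_apply0] using DFunLike.congr_fun h 0,
      by simpa [D3_apply1] using DFunLike.congr_fun h 1,
      by simpa [D3_apply2] using DFunLike.congr_fun h 2⟩
  · rintro ⟨rfl, rfl, rfl⟩; rfl

lemma monomial_D3 (a b c : ℕ) (r : ℝ) :
    monomial (D3 a b c) r = C r * X 0 ^ a * X 1 ^ b * X 2 ^ c := by
  rw [D3, add_assoc, monomial_single_add, monomial_single_add,
    ← add_zero (Finsupp.single 2 c), monomial_single_add]
  rw [show (monomial (0 : Fin 3 →₀ ℕ)) r = C r from congrFun monomial_zero' r]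
  ring

lemma exp3_cases (m : Fin 3 →₀ ℕ) (hm : m 0 + m 1 + m 2 = 3) :
    m = D3 3 0 0 ∨ m = D3 2 1 0 ∨ m = D3 1 2 0 ∨ m = D3 0 3 0 ∨ m = D3 2 0 1 ∨
    m = D3 1 1 1 ∨ m = D3 0 2 1 ∨ m = D3 1 0 2 ∨ m = D3 0 1 2 ∨ m = D3 0 0 3 := by
  have key : ∀ a b c : ℕ, m 0 = a → m 1 = b → m 2 = c → m = D3 a b c := by
    intro a b c h0 h1 h2
    ext i
    fin_cases i
    · simpa [D3_apply0] using h0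
    · simpa [D3_apply1] using h1
    · simpa [D3_apply2] using h2
  obtain ⟨a, ha⟩ : ∃ a, m 0 = a := ⟨_, rfl⟩
  obtain ⟨b, hb⟩ : ∃ b, m 1 = b := ⟨_, rfl⟩
  obtain ⟨c, hc⟩ : ∃ c, m 2 = c := ⟨_, rfl⟩
  rw [ha, hb, hc] at hm
  have ha3 : a ≤ 3 := by omega
  have hb3 : b ≤ 3 := by omega
  interval_cases a <;> interval_cases b <;>
  first
    | exact Or.inl (key _ _ _ ha hb (by omega))
    | exact Or.inr (Or.inl (key _ _ _ ha hb (by omega)))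
    | exact Or.inr (Or.inr (Or.inl (key _ _ _ ha hb (by omega))))
    | exact Or.inr (Or.inr (Or.inr (Or.inl (key _ _ _ ha hb (by omega)))))
    | exact Or.inr (Or.inr (Or.inr (Or.inr (Or.inl (key _ _ _ ha hb (by omega))))))
    | exact Or.inr (Or.inr (Or.inr (Or.inr (Or.inr (Or.inl (key _ _ _ ha hb (by omega)))))))
    | exact Or.inr (Or.inr (Or.inr (Or.inr (Or.inr (Or.inr (Or.inl (key _ _ _ ha hb (by omega))))))))
    | exact Or.inr (Or.inr (Or.inr (Or.inr (Or.inr (Or.inr (Or.inr (Or.inl (key _ _ _ ha hb (by omega)))))))))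
    | exact Or.inr (Or.inr (Or.inr (Or.inr (Or.inr (Or.inr (Or.inr (Or.inr (Or.inl (key _ _ _ ha hb (by omega))))))))))
    | exact Or.inr (Or.inr (Or.inr (Or.inr (Or.inr (Or.inr (Or.inr (Or.inr (Or.inr (key _ _ _ ha hb (by omega))))))))))
    | omega

lemma cubic_expand (q : MvPolynomial (Fin 3) ℝ) (hq : q.IsHomogeneous 3) :
    ∃ c0 c1 c2 c3 c4 c5 c6 c7 c8 c9 : ℝ,
      q = monomial (D3 3 0 0) c0 + monomial (D3 2 1 0) c1 + monomial (D3 1 2 0) c2 +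
          monomial (D3 0 3 0) c3 + monomial (D3 2 0 1) c4 + monomial (D3 1 1 1) c5 +
          monomial (D3 0 2 1) c6 + monomial (D3 1 0 2) c7 + monomial (D3 0 1 2) c8 +
          monomial (D3 0 0 3) c9 := by
  refine ⟨coeff (D3 3 0 0) q, coeff (D3 2 1 0) q, coeff (D3 1 2 0) q, coeff (D3 0 3 0) q,
    coeff (D3 2 0 1) q, coeff (D3 1 1 1) q, coeff (D3 0 2 1) q, coeff (D3 1 0 2) q,
    coeff (D3 0 1 2) q, coeff (D3 0 0 3) q, ?_⟩
  apply MvPolynomial.ext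
  intro m
  simp only [coeff_add, coeff_monomial]
  by_cases h3 : m.degree = 3
  · rcases exp3_cases m (by rw [← deg3]; exact h3) with
      rfl | rfl | rfl | rfl | rfl | rfl | rfl | rfl | rfl | rfl <;>
      simp [D3_eq_iff]
  · have hne : ∀ a b c : ℕ, a + b + c = 3 → ¬(D3 a b c = m) := by
      intro a b c habc h
      exact h3 (by rw [← h, D3_degree, habc])
    rw [if_neg (hne _ _ _ (by norm_num)), if_neg (hne _ _ _ (by norm_num)),
      if_neg (hne _ _ _ (by norm_num)), if_neg (hne _ _ _ (by norm_num)),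
      if_neg (hne _ _ _ (by norm_num)), if_neg (hne _ _ _ (by norm_num)),
      if_neg (hne _ _ _ (by norm_num)), if_neg (hne _ _ _ (by norm_num)),
      if_neg (hne _ _ _ (by norm_num)), if_neg (hne _ _ _ (by norm_num))]
    simpa using hq.coeff_eq_zero h3


noncomputable def Sq (g : MvPolynomial (Fin 3) ℝ) : ℝ :=
  -(eval ![0, 0, 1] g) + 2 * eval ![1, 0, 1] g + 2 * eval ![-1, 0, 1] g +
    2 * eval ![0, 1, 1] g + 2 * eval ![0, -1, 1] g +
    (1 / 2) * (eval ![1, 1, 1] g + eval ![1, -1, 1] g + eval ![-1, 1, 1] g +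
      eval ![-1, -1, 1] g)

lemma Sq_key (q : MvPolynomial (Fin 3) ℝ) (hq : q.IsHomogeneous 3) :
    0 ≤ Sq (q ^ 2) ∧
      (Sq (q ^ 2) = 0 → ∃ α β γ : ℝ, q = C α * pp 0 + C β * pp 1 + C γ * pp 2) := by
  obtain ⟨c0, c1, c2, c3, c4, c5, c6, c7, c8, c9, hexp⟩ := cubic_expand q hq
  have hid : Sq (q ^ 2) =
      6 * (c0 + c2 / 3 + c7) ^ 2 + (4 / 3) * c2 ^ 2 + 6 * (c3 + c1 / 3 + c8) ^ 2 +
        (4 / 3) * c1 ^ 2 + 6 * (c4 + c6 / 3 + c9) ^ 2 + (16 / 3) * (c6 + (3 / 4) * c9) ^ 2 +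
        2 * c5 ^ 2 := by
    rw [hexp]
    simp only [monomial_D3, Sq, map_pow, map_add, map_mul, eval_C, eval_X, map_neg, map_ofNat,
      Matrix.cons_val_zero, Matrix.cons_val_one, Matrix.head_cons, Matrix.cons_val_two,
      Matrix.tail_cons, map_one]
    ring
  constructor
  · rw [hid]; positivity
  · intro hSq
    rw [hSq] at hid
    have sq1 := sq_nonneg (c0 + c2 / 3 + c7)
    have sq2 := sq_nonneg c2
    have sq3 := sq_nonneg (c3 + c1 / 3 + c8)
    have sq4 := sq_nonneg c1
    have sq5 := sq_nonneg (c4 + c6 / 3 + c9)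
    have sq6 := sq_nonneg (c6 + (3 / 4) * c9)
    have sq7 := sq_nonneg c5
    have k1 : c0 + c2 / 3 + c7 = 0 := by
      have : (c0 + c2 / 3 + c7) ^ 2 = 0 := by linarith
      exact pow_eq_zero_iff two_ne_zero |>.mp this
    have k2 : c2 = 0 := by
      have : c2 ^ 2 = 0 := by linarith
      exact pow_eq_zero_iff two_ne_zero |>.mp this
    have k3 : c3 + c1 / 3 + c8 = 0 := by
      have : (c3 + c1 / 3 + c8) ^ 2 = 0 := by linarith
      exact pow_eq_zero_iff two_ne_zero |>.mp this
    have k4 : c1 = 0 := by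
      have : c1 ^ 2 = 0 := by linarith
      exact pow_eq_zero_iff two_ne_zero |>.mp this
    have k5 : c4 + c6 / 3 + c9 = 0 := by
      have : (c4 + c6 / 3 + c9) ^ 2 = 0 := by linarith
      exact pow_eq_zero_iff two_ne_zero |>.mp this
    have k6 : c6 + (3 / 4) * c9 = 0 := by
      have : (c6 + (3 / 4) * c9) ^ 2 = 0 := by linarith
      exact pow_eq_zero_iff two_ne_zero |>.mp this
    have k7 : c5 = 0 := by
      have : c5 ^ 2 = 0 := by linarith
      exact pow_eq_zero_iff two_ne_zero |>.mp this
    obtain ⟨γ, hγ⟩ : ∃ γ : ℝ, γ = -c9 / 4 := ⟨_, rfl⟩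
    refine ⟨c0, c3, γ, ?_⟩
    have H1 : C c1 = (0 : MvPolynomial (Fin 3) ℝ) := by rw [k4, map_zero]
    have H2 : C c2 = (0 : MvPolynomial (Fin 3) ℝ) := by rw [k2, map_zero]
    have H5 : C c5 = (0 : MvPolynomial (Fin 3) ℝ) := by rw [k7, map_zero]
    have H7 : (C c7 : MvPolynomial (Fin 3) ℝ) = -C c0 := by rw [show c7 = -c0 by linarith, map_neg]
    have H8 : (C c8 : MvPolynomial (Fin 3) ℝ) = -C c3 := by rw [show c8 = -c3 by linarith, map_neg]
    have H6 : (C c6 : MvPolynomial (Fin 3) ℝ) = 3 * C γ := by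
      rw [show c6 = 3 * γ by rw [hγ]; linarith, map_mul, map_ofNat]
    have H4 : (C c4 : MvPolynomial (Fin 3) ℝ) = 3 * C γ := by
      rw [show c4 = 3 * γ by rw [hγ]; linarith, map_mul, map_ofNat]
    have H9 : (C c9 : MvPolynomial (Fin 3) ℝ) = -(4 * C γ) := by
      rw [show c9 = -(4 * γ) by rw [hγ]; ring, map_neg, map_mul, map_ofNat]
    rw [hexp]
    simp only [monomial_D3, H1, H2, H4, H5, H6, H7, H8, H9]
    simp only [pp, Matrix.cons_val_zero, Matrix.cons_val_one, Matrix.head_cons,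
      Matrix.cons_val_two, Matrix.tail_cons]
    ring


lemma sq_zero (x : ℝ) (h : x ^ 2 = 0) : x = 0 := pow_eq_zero_iff two_ne_zero |>.mp h

lemma pp_pos (a : Fin 3 → ℝ) (ha : a ≠ 0) :
    0 < eval a (∑ i, pp i ^ 2 : MvPolynomial (Fin 3) ℝ) := by
  have hval : eval a (∑ i, pp i ^ 2 : MvPolynomial (Fin 3) ℝ) =
      (a 0 * (a 0 ^ 2 - a 2 ^ 2)) ^ 2 + (a 1 * (a 1 ^ 2 - a 2 ^ 2)) ^ 2 +
      ((3 * a 0 ^ 2 + 3 * a 1 ^ 2 - 4 * a 2 ^ 2) * a 2) ^ 2 := by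
    simp [pp, Fin.sum_univ_three]
  rw [hval]
  obtain h | h := lt_or_ge 0 ((a 0 * (a 0 ^ 2 - a 2 ^ 2)) ^ 2 + (a 1 * (a 1 ^ 2 - a 2 ^ 2)) ^ 2 +
      ((3 * a 0 ^ 2 + 3 * a 1 ^ 2 - 4 * a 2 ^ 2) * a 2) ^ 2)
  · exact h
  · exfalso
    apply ha
    have s1 := sq_nonneg (a 0 * (a 0 ^ 2 - a 2 ^ 2))
    have s2 := sq_nonneg (a 1 * (a 1 ^ 2 - a 2 ^ 2))
    have s3 := sq_nonneg ((3 * a 0 ^ 2 + 3 * a 1 ^ 2 - 4 * a 2 ^ 2) * a 2)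
    have z1 := mul_eq_zero.mp (sq_zero _ (by linarith : (a 0 * (a 0 ^ 2 - a 2 ^ 2)) ^ 2 = 0))
    have z2 := mul_eq_zero.mp (sq_zero _ (by linarith : (a 1 * (a 1 ^ 2 - a 2 ^ 2)) ^ 2 = 0))
    have z3 := mul_eq_zero.mp (sq_zero _
      (by linarith : ((3 * a 0 ^ 2 + 3 * a 1 ^ 2 - 4 * a 2 ^ 2) * a 2) ^ 2 = 0))
    have hz : a 0 = 0 ∧ a 1 = 0 ∧ a 2 = 0 := by
      rcases z3 with h3 | h3
      · rcases z1 with h1 | h1 <;> rcases z2 with h2 | h2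
        · refine ⟨h1, h2, sq_zero _ (by nlinarith)⟩
        · have : a 2 ^ 2 = 0 := by nlinarith
          have h2' : a 2 = 0 := sq_zero _ this
          exact ⟨h1, sq_zero _ (by nlinarith), h2'⟩
        · have : a 2 ^ 2 = 0 := by nlinarith
          have h2' : a 2 = 0 := sq_zero _ this
          exact ⟨sq_zero _ (by nlinarith), h2, h2'⟩
        · have : a 2 ^ 2 = 0 := by nlinarith
          have h2' : a 2 = 0 := sq_zero _ this
          exact ⟨sq_zero _ (by nlinarith), sq_zero _ (by nlinarith), h2'⟩
      · rcases z1 with h1 | h1 <;> rcases z2 with h2 | h2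
        · exact ⟨h1, h2, h3⟩
        · exact ⟨h1, sq_zero _ (by nlinarith), h3⟩
        · exact ⟨sq_zero _ (by nlinarith), h2, h3⟩
        · exact ⟨sq_zero _ (by nlinarith), sq_zero _ (by nlinarith), h3⟩
    funext i
    fin_cases i
    · exact hz.1
    · exact hz.2.1
    · exact hz.2.2

lemma hom_sub {φ ψ : MvPolynomial (Fin 3) ℝ} {n : ℕ} (h1 : φ.IsHomogeneous n)
    (h2 : ψ.IsHomogeneous n) : (φ - ψ).IsHomogeneous n := by
  rw [← mem_homogeneousSubmodule] at h1 h2 ⊢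
  exact Submodule.sub_mem _ h1 h2

lemma pp_hom : ∀ i, (pp i).IsHomogeneous 3 := by
  intro i
  fin_cases i
  · show (X 0 * (X 0 ^ 2 - X 2 ^ 2) : MvPolynomial (Fin 3) ℝ).IsHomogeneous 3
    exact (isHomogeneous_X _ _).mul (hom_sub (isHomogeneous_X_pow _ _) (isHomogeneous_X_pow _ _))
  · show (X 1 * (X 1 ^ 2 - X 2 ^ 2) : MvPolynomial (Fin 3) ℝ).IsHomogeneous 3
    exact (isHomogeneous_X _ _).mul (hom_sub (isHomogeneous_X_pow _ _) (isHomogeneous_X_pow _ _))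
  · show ((3 * X 0 ^ 2 + 3 * X 1 ^ 2 - 4 * X 2 ^ 2) * X 2 : MvPolynomial (Fin 3) ℝ).IsHomogeneous 3
    have h3 : ((3 : MvPolynomial (Fin 3) ℝ) * X 0 ^ 2).IsHomogeneous 2 := by
      rw [← map_ofNat (C : ℝ →+* MvPolynomial (Fin 3) ℝ) 3]
      exact (isHomogeneous_X_pow _ _).C_mul _
    have h3' : ((3 : MvPolynomial (Fin 3) ℝ) * X 1 ^ 2).IsHomogeneous 2 := by
      rw [← map_ofNat (C : ℝ →+* MvPolynomial (Fin 3) ℝ) 3]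
      exact (isHomogeneous_X_pow _ _).C_mul _
    have h4 : ((4 : MvPolynomial (Fin 3) ℝ) * X 2 ^ 2).IsHomogeneous 2 := by
      rw [← map_ofNat (C : ℝ →+* MvPolynomial (Fin 3) ℝ) 4]
      exact (isHomogeneous_X_pow _ _).C_mul _
    exact (hom_sub (h3.add h3') h4).mul (isHomogeneous_X _ _)

lemma f_hom : (∑ i, pp i ^ 2 : MvPolynomial (Fin 3) ℝ).IsHomogeneous 6 :=
  MvPolynomial.IsHomogeneous.sum _ _ _ (fun i _ => by simpa using (pp_hom i).pow 2)

lemma X26_hom : ((X 2 : MvPolynomial (Fin 3) ℝ) ^ 6).IsHomogeneous 6 :=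
  isHomogeneous_X_pow _ _


lemma sum_Sq {r : ℕ} (q : Fin r → MvPolynomial (Fin 3) ℝ) :
    ∑ i, Sq (q i ^ 2) = Sq (∑ i, q i ^ 2) := by
  simp only [Sq, map_sum, map_pow]
  rw [Finset.sum_add_distrib, Finset.sum_add_distrib, Finset.sum_add_distrib,
    Finset.sum_add_distrib, Finset.sum_add_distrib]
  simp only [Finset.sum_neg_distrib, ← Finset.mul_sum, Finset.sum_add_distrib]

lemma Sq_f : Sq (∑ i, pp i ^ 2 : MvPolynomial (Fin 3) ℝ) = 0 := by
  simp only [Sq, pp, Fin.sum_univ_three, map_sum, map_pow, map_add, map_mul, map_sub, map_neg,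
    map_ofNat, eval_X, eval_C, Matrix.cons_val_zero, Matrix.cons_val_one, Matrix.head_cons,
    Matrix.cons_val_two, Matrix.tail_cons, map_one]
  norm_num

lemma Sq_X26 : Sq ((X 2 : MvPolynomial (Fin 3) ℝ) ^ 6) = 9 := by
  simp only [Sq, map_pow, eval_X, Matrix.cons_val_two, Matrix.tail_cons, Matrix.head_cons]
  norm_num


lemma pad_sum_mul {r : ℕ} (f g : Fin r → ℝ) :
    ∑ i : Fin (r + 3), pad (r + 3) f i * pad (r + 3) g i = ∑ i : Fin r, f i * g i := by
  rw [Fin.sum_univ_add (f := fun i : Fin (r + 3) => pad (r + 3) f i * pad (r + 3) g i)]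
  have h1 : ∀ i : Fin r, pad (r + 3) f (Fin.castAdd 3 i) * pad (r + 3) g (Fin.castAdd 3 i)
      = f i * g i := by
    intro i
    simp [pad, Fin.coe_castAdd, i.isLt]
  have h2 : ∀ i : Fin 3, pad (r + 3) f (Fin.natAdd r i) * pad (r + 3) g (Fin.natAdd r i) = 0 := by
    intro i
    have : ¬ ((Fin.natAdd r i : ℕ) < r) := by simp [Fin.coe_natAdd]
    simp [pad, this]
  rw [Finset.sum_congr rfl fun i _ => h1 i, Finset.sum_congr rfl fun i _ => h2 i]
  simp

lemma ortho_complete {r : ℕ} (al be ga : Fin r → ℝ)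
    (E1 : ∑ i, al i ^ 2 = 1) (E2 : ∑ i, be i ^ 2 = 1) (E3 : ∑ i, ga i ^ 2 = 1)
    (E4 : ∑ i, al i * be i = 0) (E5 : ∑ i, al i * ga i = 0) (E6 : ∑ i, be i * ga i = 0) :
    ∃ A : Matrix (Fin (r + 3)) (Fin (r + 3)) ℝ,
      A * A.transpose = 1 ∧
      (∀ i : Fin (r + 3), ∀ h : (i : ℕ) < r,
        (A i ⟨0, by omega⟩ = al ⟨i, h⟩ ∧ A i ⟨1, by omega⟩ = be ⟨i, h⟩ ∧
          A i ⟨2, by omega⟩ = ga ⟨i, h⟩)) ∧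
      (∀ i : Fin (r + 3), ¬ ((i : ℕ) < r) →
        (A i ⟨0, by omega⟩ = 0 ∧ A i ⟨1, by omega⟩ = 0 ∧ A i ⟨2, by omega⟩ = 0)) := by
  classical
  let cf : Fin 3 → Fin r → ℝ := ![al, be, ga]
  let col : Fin 3 → EuclideanSpace ℝ (Fin (r + 3)) :=
    fun j => WithLp.toLp 2 (pad (r + 3) (cf j) : Fin (r + 3) → ℝ)
  have hinner : ∀ j1 j2 : Fin 3,
      (inner ℝ (col j1) (col j2) : ℝ) = ∑ i : Fin r, cf j1 i * cf j2 i := by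
    intro j1 j2
    rw [PiLp.inner_apply]
    simp only [RCLike.inner_apply, conj_trivial]
    exact (Finset.sum_congr rfl fun x _ => mul_comm _ _).trans (pad_sum_mul (cf j1) (cf j2))
  have hcol : ∀ j1 j2 : Fin 3, (inner ℝ (col j1) (col j2) : ℝ) = if j1 = j2 then 1 else 0 := by
    intro j1 j2
    rw [hinner]
    fin_cases j1 <;> fin_cases j2 <;>
      simp only [cf, Fin.mk_zero, Fin.mk_one, Matrix.cons_val_zero, Matrix.cons_val_one,
        Matrix.head_cons, Matrix.cons_val_two, Matrix.tail_cons, Fin.mk.injEq, if_true, if_false,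
        reduceIte, Fin.isValue, show ((⟨2, by omega⟩ : Fin 3) = (2 : Fin 3)) from rfl]
    · rw [Finset.sum_congr rfl fun x _ => (pow_two (al x)).symm]; exact E1
    · exact E4
    · exact E5
    · rw [Finset.sum_congr rfl fun x _ => mul_comm (be x) (al x)]; exact E4
    · rw [Finset.sum_congr rfl fun x _ => (pow_two (be x)).symm]; exact E2
    · exact E6
    · rw [Finset.sum_congr rfl fun x _ => mul_comm (ga x) (al x)]; exact E5
    · rw [Finset.sum_congr rfl fun x _ => mul_comm (ga x) (be x)]; exact E6
    · rw [Finset.sum_congr rfl fun x _ => (pow_two (ga x)).symm]; exact E3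
  -- the family on the subset of the first three indices
  let s : Set (Fin (r + 3)) := {j | (j : ℕ) < 3}
  let v : Fin (r + 3) → EuclideanSpace ℝ (Fin (r + 3)) :=
    fun j => if h : (j : ℕ) < 3 then col ⟨j, h⟩ else 0
  have hv : Orthonormal ℝ (s.restrict v) := by
    rw [orthonormal_iff_ite]
    rintro ⟨i, hi⟩ ⟨j, hj⟩
    have hi' : (i : ℕ) < 3 := hi
    have hj' : (j : ℕ) < 3 := hj
    simp only [Set.restrict, Set.restrict_apply, v, dif_pos hi', dif_pos hj']
    rw [hcol ⟨i, hi'⟩ ⟨j, hj'⟩]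
    by_cases hij : i = j
    · subst hij; simp
    · rw [if_neg (by simpa [Fin.ext_iff] using fun h => hij (Fin.ext h)),
        if_neg (by simpa [Subtype.ext_iff] using hij)]
  obtain ⟨b, hb⟩ := hv.exists_orthonormalBasis_extension_of_card_eq
    (by simp [finrank_euclideanSpace])
  refine ⟨fun i j => b j i, ?_, ?_, ?_⟩
  · ext i k
    rw [Matrix.one_apply]
    change ∑ j, b j i * b j k = _
    have hp := b.sum_inner_mul_inner (EuclideanSpace.single i (1 : ℝ))
      (EuclideanSpace.single k (1 : ℝ))
    simp only [EuclideanSpace.inner_single_left, EuclideanSpace.inner_single_right,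
      conj_trivial, one_mul, mul_one] at hp
    rw [hp, EuclideanSpace.single_apply]
    by_cases h : i = k
    · subst h; simp
    · rw [if_neg (fun hk => h hk.symm), if_neg h]
  · intro i h
    have m0 : (⟨0, by omega⟩ : Fin (r + 3)) ∈ s := by simp [s]
    have m1 : (⟨1, by omega⟩ : Fin (r + 3)) ∈ s := by simp [s]
    have m2 : (⟨2, by omega⟩ : Fin (r + 3)) ∈ s := by simp [s]
    dsimp only
    rw [hb _ m0, hb _ m1, hb _ m2]
    refine ⟨?_, ?_, ?_⟩ <;>
      simp [v, col, cf, pad, h]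
  · intro i h
    have m0 : (⟨0, by omega⟩ : Fin (r + 3)) ∈ s := by simp [s]
    have m1 : (⟨1, by omega⟩ : Fin (r + 3)) ∈ s := by simp [s]
    have m2 : (⟨2, by omega⟩ : Fin (r + 3)) ∈ s := by simp [s]
    dsimp only
    rw [hb _ m0, hb _ m1, hb _ m2]
    refine ⟨?_, ?_, ?_⟩ <;>
      simp [v, col, cf, pad, h]

lemma span_of_rep {r : ℕ} (q : Fin r → MvPolynomial (Fin 3) ℝ)
    (hq : ∀ i, (q i).IsHomogeneous 3)
    (heq : (∑ i, pp i ^ 2 : MvPolynomial (Fin 3) ℝ) = ∑ i, q i ^ 2) :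
    ∀ i, ∃ α β γ : ℝ, q i = C α * pp 0 + C β * pp 1 + C γ * pp 2 := by
  have htot : ∑ i, Sq (q i ^ 2) = 0 := by
    rw [sum_Sq, ← heq, Sq_f]
  have hz : ∀ i ∈ Finset.univ, Sq (q i ^ 2) = 0 :=
    (Finset.sum_eq_zero_iff_of_nonneg (fun i _ => (Sq_key _ (hq i)).1)).mp htot
  exact fun i => (Sq_key _ (hq i)).2 (hz i (Finset.mem_univ i))

/-- The theorem. -/
theorem statement19 :
    (∑ i, pp i ^ 2 : MvPolynomial (Fin 3) ℝ) =
      X 0 ^ 6 + X 1 ^ 6 + 7 * (X 0 ^ 4 + X 1 ^ 4) * X 2 ^ 2 +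
        18 * X 0 ^ 2 * X 1 ^ 2 * X 2 ^ 2 - 23 * (X 0 ^ 2 + X 1 ^ 2) * X 2 ^ 4 +
        16 * X 2 ^ 6 ∧
    (∀ a : Fin 3 → ℝ, a ≠ 0 → 0 < eval a (∑ i, pp i ^ 2 : MvPolynomial (Fin 3) ℝ)) ∧
    (∃ g ∈ frontier Sigma6,
      (g : MvPolynomial (Fin 3) ℝ) = ∑ i, pp i ^ 2) ∧
    ∀ (r : ℕ) (q : Fin r → MvPolynomial (Fin 3) ℝ),
      (∀ i, (q i).IsHomogeneous 3) → (∑ i, pp i ^ 2 : MvPolynomial (Fin 3) ℝ) = ∑ i, q i ^ 2 →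
      ∃ A : Matrix (Fin (r + 3)) (Fin (r + 3)) ℝ,
        A * A.transpose = 1 ∧
        ∀ i, pad (r + 3) q i = ∑ j, A i j • pad (r + 3) pp j := by
  refine ⟨?_, ?_, ?_, ?_⟩
  · -- explicit expansion
    simp only [pp, Fin.sum_univ_three, Matrix.cons_val_zero, Matrix.cons_val_one,
      Matrix.head_cons, Matrix.cons_val_two, Matrix.tail_cons]
    ring
  · exact pp_pos
  · -- boundary point
    refine ⟨⟨∑ i, pp i ^ 2, (mem_homogeneousSubmodule _ _).mpr f_hom⟩, ?_, rfl⟩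
    rw [← closure_diff_interior]
    constructor
    · exact subset_closure ⟨3, pp, pp_hom, rfl⟩
    · -- not interior
      intro hint
      set h6 : A6 := ⟨(X 2 : MvPolynomial (Fin 3) ℝ) ^ 6,
        (mem_homogeneousSubmodule _ _).mpr X26_hom⟩ with hh6
      obtain ⟨δ, hmem, hδ0⟩ : ∃ δ : ℝ, (⟨∑ i, pp i ^ 2, (mem_homogeneousSubmodule _ _).mpr f_hom⟩ : A6) - δ • h6 ∈
          Sigma6 ∧ 0 < δ := by
        have hc : Continuous (fun δ : ℝ =>
            (⟨∑ i, pp i ^ 2, (mem_homogeneousSubmodule _ _).mpr f_hom⟩ : A6) - δ • h6) := by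
          apply continuous_induced_rng.2
          apply continuous_induced_rng.2
          apply continuous_pi
          intro m
          show Continuous fun δ : ℝ => coeff m (∑ i, pp i ^ 2 - δ • (X 2 : MvPolynomial (Fin 3) ℝ) ^ 6)
          simp only [coeff_sub, coeff_smul, smul_eq_mul]
          fun_prop
        have h0 := hc.tendsto 0
        simp only [zero_smul, sub_zero] at h0
        have hev := (h0.mono_left (nhdsWithin_le_nhds (s := Set.Ioi 0))).eventually
          (isOpen_interior.mem_nhds hint)
        exact ((hev.and self_mem_nhdsWithin).exists).imp
          fun δ h => ⟨interior_subset h.1, h.2⟩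
      obtain ⟨r, qq, hqq, hrep⟩ := hmem
      have hco : ((⟨∑ i, pp i ^ 2, (mem_homogeneousSubmodule _ _).mpr f_hom⟩ : A6) - δ • h6 :
          A6).1 = (∑ i, pp i ^ 2 : MvPolynomial (Fin 3) ℝ) - C δ * X 2 ^ 6 := by
        rw [Submodule.coe_sub, Submodule.coe_smul]
        simp [hh6, smul_eq_C_mul]
      rw [hco] at hrep
      have hSqlhs : Sq ((∑ i, pp i ^ 2 : MvPolynomial (Fin 3) ℝ) - C δ * X 2 ^ 6) = -(9 * δ) := by
        have : Sq ((∑ i, pp i ^ 2 : MvPolynomial (Fin 3) ℝ) - C δ * X 2 ^ 6) =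
            Sq (∑ i, pp i ^ 2) - δ * Sq (X 2 ^ 6) := by
          simp only [Sq, map_sub, map_mul, eval_C]
          ring
        rw [this, Sq_f, Sq_X26]; ring
      have hsum : ∑ i, Sq (qq i ^ 2) = -(9 * δ) := by
        rw [sum_Sq, ← hrep, hSqlhs]
      have hnn : 0 ≤ ∑ i, Sq (qq i ^ 2) :=
        Finset.sum_nonneg fun i _ => (Sq_key _ (hqq i)).1
      rw [hsum] at hnn
      nlinarith
  · -- uniqueness up to orthogonal equivalence
    intro r q hq heq
    obtain ⟨al, be, ga, hrep⟩ : ∃ al be ga : Fin r → ℝ, ∀ i,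
        q i = C (al i) * pp 0 + C (be i) * pp 1 + C (ga i) * pp 2 := by
      have h := span_of_rep q hq heq
      choose al be ga hrep using h
      exact ⟨al, be, ga, hrep⟩
    -- evaluation identities
    have hv : ∀ v : Fin 3 → ℝ, ∑ i, (eval v (q i)) ^ 2 = eval v (∑ i, pp i ^ 2) := by
      intro v
      rw [heq, map_sum]
      simp only [map_pow]
    have hgen : ∀ (v : Fin 3 → ℝ) (i : Fin r), eval v (q i) =
        al i * eval v (pp 0) + be i * eval v (pp 1) + ga i * eval v (pp 2) := by
      intro v i
      rw [hrep i]
      simp only [map_add, map_mul, eval_C]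
    have hE1 : ∑ i, al i ^ 2 = 1 := by
      have h := hv ![1, 0, 0]
      rw [show ∑ i, (eval ![1, 0, 0] (q i)) ^ 2 = ∑ i, al i ^ 2 from
        Finset.sum_congr rfl fun i _ => by
          rw [hgen]
          norm_num [pp, Matrix.cons_val_two, Matrix.tail_cons, Matrix.head_cons]] at h
      rw [h]
      norm_num [pp, Fin.sum_univ_three, Matrix.cons_val_two, Matrix.tail_cons, Matrix.head_cons]
    have hE2 : ∑ i, be i ^ 2 = 1 := by
      have h := hv ![0, 1, 0]
      rw [show ∑ i, (eval ![0, 1, 0] (q i)) ^ 2 = ∑ i, be i ^ 2 from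
        Finset.sum_congr rfl fun i _ => by
          rw [hgen]
          norm_num [pp, Matrix.cons_val_two, Matrix.tail_cons, Matrix.head_cons]] at h
      rw [h]
      norm_num [pp, Fin.sum_univ_three, Matrix.cons_val_two, Matrix.tail_cons, Matrix.head_cons]
    have hE3 : ∑ i, ga i ^ 2 = 1 := by
      have h := hv ![0, 0, 1]
      rw [show ∑ i, (eval ![0, 0, 1] (q i)) ^ 2 = ∑ i, 16 * ga i ^ 2 from
        Finset.sum_congr rfl fun i _ => by
          rw [hgen]
          norm_num [pp, Matrix.cons_val_two, Matrix.tail_cons, Matrix.head_cons]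
          ring] at h
      rw [← Finset.mul_sum] at h
      have h16 : eval ![0, 0, 1] (∑ i, pp i ^ 2 : MvPolynomial (Fin 3) ℝ) = 16 := by
        norm_num [pp, Fin.sum_univ_three, Matrix.cons_val_two, Matrix.tail_cons, Matrix.head_cons]
      rw [h16] at h
      linarith
    have hE4 : ∑ i, al i * be i = 0 := by
      have h := hv ![1, 1, 0]
      rw [show ∑ i, (eval ![1, 1, 0] (q i)) ^ 2 =
          ∑ i, (al i ^ 2 + 2 * (al i * be i) + be i ^ 2) from
        Finset.sum_congr rfl fun i _ => by
          rw [hgen]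
          norm_num [pp, Matrix.cons_val_two, Matrix.tail_cons, Matrix.head_cons]
          ring] at h
      rw [Finset.sum_add_distrib, Finset.sum_add_distrib, ← Finset.mul_sum] at h
      have hf : eval ![1, 1, 0] (∑ i, pp i ^ 2 : MvPolynomial (Fin 3) ℝ) = 2 := by
        norm_num [pp, Fin.sum_univ_three, Matrix.cons_val_two, Matrix.tail_cons, Matrix.head_cons]
      rw [hf] at h
      rw [hE1, hE2] at h
      linarith
    have hE5 : ∑ i, al i * ga i = 0 := by
      have h := hv ![2, 0, 1]
      rw [show ∑ i, (eval ![2, 0, 1] (q i)) ^ 2 =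
          ∑ i, (36 * al i ^ 2 + 96 * (al i * ga i) + 64 * ga i ^ 2) from
        Finset.sum_congr rfl fun i _ => by
          rw [hgen]
          norm_num [pp, Matrix.cons_val_two, Matrix.tail_cons, Matrix.head_cons]
          ring] at h
      rw [Finset.sum_add_distrib, Finset.sum_add_distrib, ← Finset.mul_sum, ← Finset.mul_sum,
        ← Finset.mul_sum] at h
      have hf : eval ![2, 0, 1] (∑ i, pp i ^ 2 : MvPolynomial (Fin 3) ℝ) = 100 := by
        norm_num [pp, Fin.sum_univ_three, Matrix.cons_val_two, Matrix.tail_cons, Matrix.head_cons]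
      rw [hf, hE1, hE3] at h
      linarith
    have hE6 : ∑ i, be i * ga i = 0 := by
      have h := hv ![0, 2, 1]
      rw [show ∑ i, (eval ![0, 2, 1] (q i)) ^ 2 =
          ∑ i, (36 * be i ^ 2 + 96 * (be i * ga i) + 64 * ga i ^ 2) from
        Finset.sum_congr rfl fun i _ => by
          rw [hgen]
          norm_num [pp, Matrix.cons_val_two, Matrix.tail_cons, Matrix.head_cons]
          ring] at h
      rw [Finset.sum_add_distrib, Finset.sum_add_distrib, ← Finset.mul_sum, ← Finset.mul_sum,
        ← Finset.mul_sum] at h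
      have hf : eval ![0, 2, 1] (∑ i, pp i ^ 2 : MvPolynomial (Fin 3) ℝ) = 100 := by
        norm_num [pp, Fin.sum_univ_three, Matrix.cons_val_two, Matrix.tail_cons, Matrix.head_cons]
      rw [hf, hE2, hE3] at h
      linarith
    obtain ⟨A, hA1, hA2, hA3⟩ := ortho_complete al be ga hE1 hE2 hE3 hE4 hE5 hE6
    refine ⟨A, hA1, ?_⟩
    intro i
    -- reduce the sum to the first three indices
    have hzero : ∀ j : Fin (r + 3), ¬((j : ℕ) < 3) → A i j • pad (r + 3) pp j = 0 := by
      intro j hj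
      rw [show pad (r + 3) pp j = 0 from dif_neg hj, smul_zero]
    have hsubset : ({⟨0, by omega⟩, ⟨1, by omega⟩, ⟨2, by omega⟩} : Finset (Fin (r + 3))) ⊆
        Finset.univ := Finset.subset_univ _
    have hsum : ∑ j, A i j • pad (r + 3) pp j =
        ∑ j ∈ ({⟨0, by omega⟩, ⟨1, by omega⟩, ⟨2, by omega⟩} : Finset (Fin (r + 3))),
          A i j • pad (r + 3) pp j := by
      refine (Finset.sum_subset hsubset ?_).symm
      intro x _ hx
      simp only [Finset.mem_insert, Finset.mem_singleton, Fin.ext_iff] at hx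
      exact hzero x (by omega)
    rw [hsum, Finset.sum_insert (by simp [Fin.ext_iff]),
      Finset.sum_insert (by simp [Fin.ext_iff]), Finset.sum_singleton]
    have hp0 : pad (r + 3) pp (⟨0, by omega⟩ : Fin (r + 3)) = pp 0 := by
      rw [show pad (r + 3) pp (⟨0, by omega⟩ : Fin (r + 3)) = pp ⟨0, by omega⟩ from
        dif_pos (by norm_num)]
      rfl
    have hp1 : pad (r + 3) pp (⟨1, by omega⟩ : Fin (r + 3)) = pp 1 := by
      rw [show pad (r + 3) pp (⟨1, by omega⟩ : Fin (r + 3)) = pp ⟨1, by omega⟩ from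
        dif_pos (by norm_num)]
      rfl
    have hp2 : pad (r + 3) pp (⟨2, by omega⟩ : Fin (r + 3)) = pp 2 := by
      rw [show pad (r + 3) pp (⟨2, by omega⟩ : Fin (r + 3)) = pp ⟨2, by omega⟩ from
        dif_pos (by norm_num)]
      rfl
    rw [hp0, hp1, hp2]
    by_cases h : (i : ℕ) < r
    · obtain ⟨hA0, hA1', hA2'⟩ := hA2 i h
      rw [hA0, hA1', hA2']
      rw [show pad (r + 3) q i = q ⟨i, h⟩ from dif_pos h, hrep]
      simp only [smul_eq_C_mul]
      ring
    · obtain ⟨hA0, hA1', hA2'⟩ := hA3 i h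
      rw [hA0, hA1', hA2']
      rw [show pad (r + 3) q i = 0 from dif_neg h]
      simp
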